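/- arXiv:math/9401205 — 3 statements merged into one kernel-verified Lean document; each statement's English description precedes it below -/
import Mathlib

section
/- For every bounded linear operator T : X → Y between Banach spaces and every n ∈ ℕ one has π₂ⁿ(T) ≤ √6 · 1-π₂ⁿ(T). -/
open MeasureTheory

noncomputable section

/-- The weak-`ℓ₂` norm `sup_{‖a‖_{X*}≤1} (∑ |⟨x_i,a⟩|²)^{1/2}`. -/
def weakL2 {X : Type*} [NormedAddCommGroup X] [NormedSpace ℝ X] {m : ℕ}
    (x : Fin m → X) : ℝ :=
  ⨆ a : {a : X →L[ℝ] ℝ // ‖a‖ ≤ 1}, Real.sqrt (∑ i, (a.1 (x i)) ^ 2)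

/-- The absolutely 2-summing norm restricted to `n` vectors. -/
def pi2n (n : ℕ) {X Y : Type*} [NormedAddCommGroup X] [NormedSpace ℝ X]
    [NormedAddCommGroup Y] [NormedSpace ℝ Y] (T : X → Y) : ℝ :=
  sInf {c | 0 ≤ c ∧ ∀ x : Fin n → X,
    Real.sqrt (∑ i, ‖T (x i)‖ ^ 2) ≤ c * weakL2 x}

/-- The equal-norm 2-summing constant `1-π₂ⁿ`. -/
def eqPi2n (n : ℕ) {X Y : Type*} [NormedAddCommGroup X] [NormedSpace ℝ X]
    [NormedAddCommGroup Y] [NormedSpace ℝ Y] (T : X → Y) : ℝ :=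
  sInf {c | 0 ≤ c ∧ ∀ x : Fin n → X, (∀ i j, ‖T (x i)‖ = ‖T (x j)‖) →
    Real.sqrt (∑ i, ‖T (x i)‖ ^ 2) ≤ c * weakL2 x}

/-! Given `x₁, …, xₙ` with `σ = ∑ ‖T xᵢ‖² > 0`, discard the indices with `‖T xᵢ‖² < σ / (2n)`:
they carry at most half of `σ`. Rounding the weights `n ‖T xᵢ‖² / (remaining mass)` to integers,
repeat each remaining `xᵢ` at most `4n ‖T xᵢ‖² / σ` times, `n` vectors in all, each rescaled so
that its image has norm `√(σ / (4n))`. The new family has equal-norm images of total square mass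
`σ / 4` and weak-`ℓ₂` norm at most that of `x`, so in fact `π₂ⁿ(T) ≤ 2 · 1-π₂ⁿ(T)`. -/

open Finset

section WeakL2

variable {X : Type*} [NormedAddCommGroup X] [NormedSpace ℝ X] {m : ℕ}

lemma sq_apply_le_sq_norm {a : X →L[ℝ] ℝ} (ha : ‖a‖ ≤ 1) (v : X) : a v ^ 2 ≤ ‖v‖ ^ 2 := by
  rw [← sq_abs, ← Real.norm_eq_abs]
  gcongr
  simpa using a.le_of_opNorm_le ha v

lemma weakL2_bddAbove (x : Fin m → X) :
    BddAbove (Set.range fun a : {a : X →L[ℝ] ℝ // ‖a‖ ≤ 1} => √(∑ i, a.1 (x i) ^ 2)) := by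
  refine ⟨√(∑ i, ‖x i‖ ^ 2), ?_⟩
  rintro _ ⟨a, rfl⟩
  exact Real.sqrt_le_sqrt (sum_le_sum fun i _ => sq_apply_le_sq_norm a.2 (x i))

lemma weakL2_nonneg (x : Fin m → X) : 0 ≤ weakL2 x :=
  Real.iSup_nonneg fun _ => Real.sqrt_nonneg _

lemma sqrt_sum_sq_le_weakL2 (x : Fin m → X) {a : X →L[ℝ] ℝ} (ha : ‖a‖ ≤ 1) :
    √(∑ i, a (x i) ^ 2) ≤ weakL2 x :=
  le_ciSup (weakL2_bddAbove x) ⟨a, ha⟩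

lemma weakL2_le {x : Fin m → X} {M : ℝ} (hM : 0 ≤ M)
    (h : ∀ a : X →L[ℝ] ℝ, ‖a‖ ≤ 1 → √(∑ i, a (x i) ^ 2) ≤ M) : weakL2 x ≤ M :=
  Real.iSup_le (fun a => h a.1 a.2) hM

lemma norm_le_weakL2 (x : Fin m → X) (i : Fin m) : ‖x i‖ ≤ weakL2 x := by
  rcases eq_or_ne (x i) 0 with hx | hx
  · rw [hx, norm_zero]
    exact weakL2_nonneg x
  obtain ⟨a, ha, hax⟩ := exists_dual_vector ℝ (x i) (norm_ne_zero_iff.mpr hx)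
  calc ‖x i‖ = √(a (x i) ^ 2) := by simp [hax]
    _ ≤ √(∑ j, a (x j) ^ 2) :=
      Real.sqrt_le_sqrt (single_le_sum (fun j _ => sq_nonneg (a (x j))) (mem_univ i))
    _ ≤ weakL2 x := sqrt_sum_sq_le_weakL2 x ha.le

lemma weakL2_smul_comp_sigma_le {n N : ℕ} (x : Fin n → X) {mult : Fin n → ℕ}
    (e : Fin N ≃ Σ i, Fin (mult i)) (s : Fin n → ℝ) {K : ℝ} (hK : ∀ i, mult i * s i ^ 2 ≤ K) :
    weakL2 (fun j => s (e j).1 • x (e j).1) ≤ √K * weakL2 x := by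
  refine weakL2_le (by have := weakL2_nonneg x; positivity) fun a ha => ?_
  have hsum : ∑ j, a (s (e j).1 • x (e j).1) ^ 2 = ∑ i, mult i * s i ^ 2 * a (x i) ^ 2 := by
    simp_rw [map_smul, smul_eq_mul, mul_pow]
    rw [e.sum_comp fun p => s p.1 ^ 2 * a (x p.1) ^ 2, Fintype.sum_sigma]
    simp [mul_assoc]
  calc √(∑ j, a (s (e j).1 • x (e j).1) ^ 2) ≤ √(K * ∑ i, a (x i) ^ 2) := by
        rw [hsum, mul_sum]
        gcongr with i
        exact hK i
    _ = √K * √(∑ i, a (x i) ^ 2) := Real.sqrt_mul' _ (sum_nonneg fun i _ => sq_nonneg _)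
    _ ≤ √K * weakL2 x := by gcongr; exact sqrt_sum_sq_le_weakL2 x ha

end WeakL2

lemma exists_le_sum_eq_of_le_sum {ι : Type*} [Fintype ι] {c : ι → ℕ} {N : ℕ}
    (h : N ≤ ∑ i, c i) : ∃ m ≤ c, ∑ i, m i = N := by
  classical
  induction N with
  | zero => exact ⟨0, fun _ => Nat.zero_le _, by simp⟩
  | succ N ih =>
    obtain ⟨m, hmc, hm⟩ := ih (by omega)
    obtain ⟨i, -, hi⟩ := exists_lt_of_sum_lt (hm ▸ h : ∑ j, m j < ∑ j, c j)
    refine ⟨m + Pi.single i 1, fun j => ?_, by simp [sum_add_distrib, hm]⟩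
    rcases eq_or_ne j i with rfl | hj
    · simpa using hi
    · simpa [hj] using hmc j

lemma half_sum_le_sum_filter {ι : Type*} [Fintype ι] (w : ι → ℝ) (hw : 0 ≤ ∑ i, w i) :
    (∑ i, w i) / 2 ≤ ∑ i with (∑ j, w j) / (2 * Fintype.card ι) ≤ w i, w i := by
  set τ := (∑ j, w j) / (2 * Fintype.card ι)
  have hsmall : ∑ i with ¬τ ≤ w i, w i ≤ (∑ i, w i) / 2 :=
    calc ∑ i with ¬τ ≤ w i, w i ≤ ∑ i with ¬τ ≤ w i, τ := sum_le_sum fun i hi => by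
          simp only [mem_filter] at hi
          linarith [hi.2]
      _ ≤ Fintype.card ι * τ := by
          rw [sum_const, nsmul_eq_mul]
          gcongr
          exact_mod_cast card_le_univ _
      _ ≤ (∑ i, w i) / 2 := by
          rcases eq_or_ne (Fintype.card ι : ℝ) 0 with hk | hk
          · rw [hk, zero_mul]; positivity
          · rw [mul_div_assoc', mul_comm (2 : ℝ), ← div_div, mul_div_cancel_left₀ _ hk]
  linarith [sum_filter_add_sum_filter_not univ (τ ≤ w ·) w]

lemma exists_sum_eq_and_le_ceil {ι : Type*} [Fintype ι] {p : ι → ℝ} {N : ℕ}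
    (h : N ≤ ∑ i, p i) : ∃ m : ι → ℕ, ∑ i, m i = N ∧ ∀ i, m i ≤ ⌈p i⌉₊ := by
  have hN : (N : ℝ) ≤ ∑ i, (⌈p i⌉₊ : ℝ) := h.trans (sum_le_sum fun i _ => Nat.le_ceil _)
  obtain ⟨m, hmc, hm⟩ := exists_le_sum_eq_of_le_sum (c := fun i => ⌈p i⌉₊) (by exact_mod_cast hN)
  exact ⟨m, hm, hmc⟩

lemma exists_sum_eq_and_le_mul_div {ι : Type*} [Fintype ι] {w : ι → ℝ} (hw : ∀ i, 0 ≤ w i)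
    (hpos : 0 < ∑ i, w i) (N : ℕ) :
    ∃ m : ι → ℕ, ∑ i, m i = N ∧ ∀ i, (m i : ℝ) ≤ 2 * (N + Fintype.card ι) * w i / ∑ j, w j := by
  classical
  set σ := ∑ j, w j
  set k := Fintype.card ι
  obtain ⟨i₀, -, -⟩ := exists_lt_of_sum_lt (by simpa using hpos : ∑ _i : ι, (0 : ℝ) < σ)
  have hk : (0 : ℝ) < k := by exact_mod_cast Fintype.card_pos_iff.mpr ⟨i₀⟩
  set S := ({i | σ / (2 * k) ≤ w i} : Finset ι)
  set W := ∑ i ∈ S, w i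
  have hW : σ / 2 ≤ W := half_sum_le_sum_filter w hpos.le
  have hWpos : 0 < W := by linarith
  have hN : (N : ℝ) = ∑ i, if i ∈ S then N * w i / W else 0 := by
    rw [sum_ite_mem, univ_inter, ← sum_div, ← mul_sum, mul_div_cancel_right₀ _ hWpos.ne']
  obtain ⟨m, hm, hmp⟩ := exists_sum_eq_and_le_ceil hN.le
  refine ⟨m, hm, fun i => ?_⟩
  have hmi := hmp i
  split_ifs at hmi with hi
  · have hτ : 1 ≤ 2 * k * w i / σ := by
      rw [le_div_iff₀ hpos]
      have := (mem_filter.mp hi).2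
      rw [div_le_iff₀ (by positivity)] at this
      linarith
    have hNW : N * w i / W ≤ 2 * N * w i / σ := by
      rw [div_le_div_iff₀ hWpos hpos]
      nlinarith [mul_nonneg (Nat.cast_nonneg N) (hw i)]
    calc (m i : ℝ) ≤ ⌈N * w i / W⌉₊ := by exact_mod_cast hmi
      _ ≤ N * w i / W + 1 := (Nat.ceil_lt_add_one (by have := hw i; positivity)).le
      _ ≤ 2 * N * w i / σ + 2 * k * w i / σ := add_le_add hNW hτ
      _ = _ := by ring
  · rw [Nat.ceil_zero, Nat.le_zero] at hmi
    rw [hmi, Nat.cast_zero]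
    have := hw i
    positivity

section Operator

variable {X Y : Type*} [NormedAddCommGroup X] [NormedSpace ℝ X]
  [NormedAddCommGroup Y] [NormedSpace ℝ Y]

lemma sqrt_sum_norm_sq_le_opNorm_mul {n : ℕ} (T : X →L[ℝ] Y) (x : Fin n → X) :
    √(∑ i, ‖T (x i)‖ ^ 2) ≤ ‖T‖ * √n * weakL2 x :=
  calc √(∑ i, ‖T (x i)‖ ^ 2) ≤ √(∑ _i : Fin n, (‖T‖ * weakL2 x) ^ 2) :=
        Real.sqrt_le_sqrt <| sum_le_sum fun i _ => by
          gcongr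
          exact T.le_opNorm_of_le (norm_le_weakL2 x i)
    _ = ‖T‖ * √n * weakL2 x := by
        rw [sum_const, card_univ, Fintype.card_fin, nsmul_eq_mul, Real.sqrt_mul (Nat.cast_nonneg _),
          Real.sqrt_sq (mul_nonneg (norm_nonneg T) (weakL2_nonneg x))]
        ring

lemma exists_equal_norm_images_of_pos (T : X →L[ℝ] Y) {n : ℕ} (x : Fin n → X)
    (hσ : 0 < ∑ i, ‖T (x i)‖ ^ 2) :
    ∃ y : Fin n → X, (∀ i j, ‖T (y i)‖ = ‖T (y j)‖) ∧
      √(∑ i, ‖T (x i)‖ ^ 2) ≤ 2 * √(∑ j, ‖T (y j)‖ ^ 2) ∧ weakL2 y ≤ weakL2 x := by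
  set σ := ∑ i, ‖T (x i)‖ ^ 2
  have hn : (n : ℝ) ≠ 0 := Nat.cast_ne_zero.mpr (by rintro rfl; simp [σ] at hσ)
  obtain ⟨m, hm, hmw⟩ := exists_sum_eq_and_le_mul_div (fun i => sq_nonneg ‖T (x i)‖) hσ n
  simp only [Fintype.card_fin] at hmw
  let e : Fin n ≃ Σ i, Fin (m i) := (Fintype.equivFinOfCardEq (by simp [hm])).symm
  set r := √(σ / (4 * n)) with hr
  set s : Fin n → ℝ := fun i => r / ‖T (x i)‖
  have hTx : ∀ j, ‖T (x (e j).1)‖ ≠ 0 := fun j h => by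
    have : m (e j).1 = 0 := by simpa [h] using hmw (e j).1
    exact (Fin.pos (e j).2).ne' this
  have hTy : ∀ j, ‖T (s (e j).1 • x (e j).1)‖ = r := fun j => by
    rw [map_smul, norm_smul, Real.norm_eq_abs, abs_div, abs_norm,
      abs_of_nonneg (Real.sqrt_nonneg _), div_mul_cancel₀ _ (hTx j)]
  have hK : ∀ i, m i * s i ^ 2 ≤ 1 := fun i => by
    rcases eq_or_ne ‖T (x i)‖ 0 with h | h
    · simp [s, h]
    have hmi := hmw i
    rw [le_div_iff₀ hσ] at hmi
    rw [div_pow, hr, Real.sq_sqrt (by positivity), mul_div_assoc', div_le_one (by positivity),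
      mul_div_assoc', div_le_iff₀ (by positivity)]
    linarith
  refine ⟨fun j => s (e j).1 • x (e j).1, fun i j => by rw [hTy, hTy], ?_, ?_⟩
  · have hnr : (n : ℝ) * r ^ 2 = (√σ / 2) ^ 2 := by
      rw [hr, Real.sq_sqrt (by positivity), div_pow, Real.sq_sqrt hσ.le]
      field_simp
      ring
    simp only [hTy, sum_const, card_univ, Fintype.card_fin, nsmul_eq_mul, hnr]
    rw [Real.sqrt_sq (by positivity)]
    linarith
  · simpa using weakL2_smul_comp_sigma_le x e s hK

lemma exists_equal_norm_images (T : X →L[ℝ] Y) {n : ℕ} (x : Fin n → X) :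
    ∃ y : Fin n → X, (∀ i j, ‖T (y i)‖ = ‖T (y j)‖) ∧
      √(∑ i, ‖T (x i)‖ ^ 2) ≤ 2 * √(∑ j, ‖T (y j)‖ ^ 2) ∧ weakL2 y ≤ weakL2 x := by
  rcases (sum_nonneg fun i _ => sq_nonneg ‖T (x i)‖).eq_or_lt with hσ | hσ
  · refine ⟨0, by simp, by rw [← hσ, Real.sqrt_zero]; positivity,
      weakL2_le (weakL2_nonneg x) fun a _ => by simpa using weakL2_nonneg x⟩
  · exact exists_equal_norm_images_of_pos T x hσ

lemma pi2n_le {n : ℕ} (T : X → Y) {c : ℝ} (hc : 0 ≤ c)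
    (h : ∀ x : Fin n → X, √(∑ i, ‖T (x i)‖ ^ 2) ≤ c * weakL2 x) : pi2n n T ≤ c :=
  csInf_le ⟨0, fun _ hc => hc.1⟩ ⟨hc, h⟩

lemma pi2n_le_two_mul_eqPi2n (T : X →L[ℝ] Y) (n : ℕ) : pi2n n T ≤ 2 * eqPi2n n T := by
  have hne : {c | 0 ≤ c ∧ ∀ x : Fin n → X, (∀ i j, ‖T (x i)‖ = ‖T (x j)‖) →
      √(∑ i, ‖T (x i)‖ ^ 2) ≤ c * weakL2 x}.Nonempty :=
    ⟨‖T‖ * √n, by positivity, fun x _ => sqrt_sum_norm_sq_le_opNorm_mul T x⟩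
  rw [← div_le_iff₀' two_pos]
  refine le_csInf hne fun c ⟨hc, hcT⟩ => ?_
  rw [div_le_iff₀' two_pos]
  refine pi2n_le T (by positivity) fun x => ?_
  obtain ⟨y, hy, hxy, hyx⟩ := exists_equal_norm_images T x
  calc √(∑ i, ‖T (x i)‖ ^ 2) ≤ 2 * √(∑ j, ‖T (y j)‖ ^ 2) := hxy
    _ ≤ 2 * (c * weakL2 y) := by gcongr; exact hcT y hy
    _ ≤ 2 * c * weakL2 x := by rw [← mul_assoc]; gcongr

end Operator

theorem pi2n_le_sqrt_six_mul_eqPi2n_general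
    {X Y : Type*} [NormedAddCommGroup X] [NormedSpace ℝ X]
    [NormedAddCommGroup Y] [NormedSpace ℝ Y]
    (T : X →L[ℝ] Y) (n : ℕ) :
    pi2n n (⇑T) ≤ Real.sqrt 6 * eqPi2n n (⇑T) := by
  calc pi2n n T ≤ 2 * eqPi2n n T := pi2n_le_two_mul_eqPi2n T n
    _ ≤ √6 * eqPi2n n T := by
      gcongr
      · exact Real.sInf_nonneg fun c hc => hc.1
      · exact Real.le_sqrt_of_sq_le (by norm_num)

/-- **Lemma 1.1.** `π₂ⁿ(T) ≤ √6 · 1-π₂ⁿ(T)`. -/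
theorem pi2n_le_sqrt_six_mul_eqPi2n
    {X Y : Type*} [NormedAddCommGroup X] [NormedSpace ℝ X] [CompleteSpace X]
    [NormedAddCommGroup Y] [NormedSpace ℝ Y] [CompleteSpace Y]
    (T : X →L[ℝ] Y) (n : ℕ) :
    pi2n n (⇑T) ≤ Real.sqrt 6 * eqPi2n n (⇑T) :=
  pi2n_le_sqrt_six_mul_eqPi2n_general T n

end
end

section
/- Let α be an ideal norm on L(ℓ₂ⁿ, ·) and β an ideal norm on L(·, ℓ₂ⁿ). (1) If u : ℓ₂ⁿ → X satisfies ‖u e_i‖ = 1 for i = 1,…,n, then α(ι_{2,∞}ⁿ) ≤ α(u). (2) If v : X → ℓ₂ⁿ satisfies ‖v* e_i‖ = 1 for i = 1,…,n, then β(ι_{1,2}ⁿ) ≤ β(v). -/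
open MeasureTheory ProbabilityTheory

noncomputable section

/-- `ℓ₂ⁿ`. -/
abbrev l2n (n : ℕ) := EuclideanSpace ℝ (Fin n)
/-- `ℓ∞ⁿ` (i.e. `ℝⁿ` with the sup norm). -/
abbrev linfn (n : ℕ) := Fin n → ℝ
/-- `ℓ₁ⁿ`. -/
abbrev l1n (n : ℕ) := PiLp 1 (fun _ : Fin n => ℝ)

/-- formal identity `ι_{2,∞}ⁿ : ℓ₂ⁿ → ℓ∞ⁿ`. -/
def iota2inf (n : ℕ) : l2n n →L[ℝ] linfn n :=
  (PiLp.continuousLinearEquiv 2 ℝ (fun _ : Fin n => ℝ)).toContinuousLinearMap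

/-- formal identity `ι_{1,2}ⁿ : ℓ₁ⁿ → ℓ₂ⁿ`. -/
def iota12 (n : ℕ) : l1n n →L[ℝ] l2n n :=
  ((PiLp.continuousLinearEquiv 2 ℝ (fun _ : Fin n => ℝ)).symm.toContinuousLinearMap).comp
    (PiLp.continuousLinearEquiv 1 ℝ (fun _ : Fin n => ℝ)).toContinuousLinearMap

/-- An ideal norm on `L(ℓ₂ⁿ, ·)`: a norm `α` on each component `L(ℓ₂ⁿ, X)` with
`‖TuA‖ ≤ α(TuA) ≤ ‖T‖ α(u) ‖A‖` and `α(a ⊗ x) = ‖a‖ ‖x‖`. -/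
structure IdealNormDom (n : ℕ) where
  α : ∀ (X : Type) [NormedAddCommGroup X] [NormedSpace ℝ X] [CompleteSpace X],
        (l2n n →L[ℝ] X) → ℝ
  add_le : ∀ (X : Type) [NormedAddCommGroup X] [NormedSpace ℝ X] [CompleteSpace X]
        (u v : l2n n →L[ℝ] X), α X (u + v) ≤ α X u + α X v
  smul_eq : ∀ (X : Type) [NormedAddCommGroup X] [NormedSpace ℝ X] [CompleteSpace X]
        (c : ℝ) (u : l2n n →L[ℝ] X), α X (c • u) = |c| * α X u
  eq_zero : ∀ (X : Type) [NormedAddCommGroup X] [NormedSpace ℝ X] [CompleteSpace X]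
        (u : l2n n →L[ℝ] X), α X u = 0 → u = 0
  ideal_lower : ∀ (X Y : Type) [NormedAddCommGroup X] [NormedSpace ℝ X] [CompleteSpace X]
        [NormedAddCommGroup Y] [NormedSpace ℝ Y] [CompleteSpace Y]
        (T : X →L[ℝ] Y) (u : l2n n →L[ℝ] X) (A : l2n n →L[ℝ] l2n n),
        ‖T.comp (u.comp A)‖ ≤ α Y (T.comp (u.comp A))
  ideal_upper : ∀ (X Y : Type) [NormedAddCommGroup X] [NormedSpace ℝ X] [CompleteSpace X]
        [NormedAddCommGroup Y] [NormedSpace ℝ Y] [CompleteSpace Y]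
        (T : X →L[ℝ] Y) (u : l2n n →L[ℝ] X) (A : l2n n →L[ℝ] l2n n),
        α Y (T.comp (u.comp A)) ≤ ‖T‖ * α X u * ‖A‖
  rank_one : ∀ (X : Type) [NormedAddCommGroup X] [NormedSpace ℝ X] [CompleteSpace X]
        (a : l2n n) (x : X), α X ((innerSL ℝ a).smulRight x) = ‖a‖ * ‖x‖

/-- An ideal norm on `L(·, ℓ₂ⁿ)`: a norm `β` on each component `L(Y, ℓ₂ⁿ)` with
`‖AvT‖ ≤ β(AvT) ≤ ‖A‖ β(v) ‖T‖` and `β(b ⊗ y) = ‖b‖ ‖y‖`. -/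
structure IdealNormCod (n : ℕ) where
  β : ∀ (Y : Type) [NormedAddCommGroup Y] [NormedSpace ℝ Y] [CompleteSpace Y],
        (Y →L[ℝ] l2n n) → ℝ
  add_le : ∀ (Y : Type) [NormedAddCommGroup Y] [NormedSpace ℝ Y] [CompleteSpace Y]
        (v w : Y →L[ℝ] l2n n), β Y (v + w) ≤ β Y v + β Y w
  smul_eq : ∀ (Y : Type) [NormedAddCommGroup Y] [NormedSpace ℝ Y] [CompleteSpace Y]
        (c : ℝ) (v : Y →L[ℝ] l2n n), β Y (c • v) = |c| * β Y v
  eq_zero : ∀ (Y : Type) [NormedAddCommGroup Y] [NormedSpace ℝ Y] [CompleteSpace Y]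
        (v : Y →L[ℝ] l2n n), β Y v = 0 → v = 0
  ideal_lower : ∀ (X Y : Type) [NormedAddCommGroup X] [NormedSpace ℝ X] [CompleteSpace X]
        [NormedAddCommGroup Y] [NormedSpace ℝ Y] [CompleteSpace Y]
        (A : l2n n →L[ℝ] l2n n) (v : Y →L[ℝ] l2n n) (T : X →L[ℝ] Y),
        ‖A.comp (v.comp T)‖ ≤ β X (A.comp (v.comp T))
  ideal_upper : ∀ (X Y : Type) [NormedAddCommGroup X] [NormedSpace ℝ X] [CompleteSpace X]
        [NormedAddCommGroup Y] [NormedSpace ℝ Y] [CompleteSpace Y]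
        (A : l2n n →L[ℝ] l2n n) (v : Y →L[ℝ] l2n n) (T : X →L[ℝ] Y),
        β X (A.comp (v.comp T)) ≤ ‖A‖ * β Y v * ‖T‖
  rank_one : ∀ (Y : Type) [NormedAddCommGroup Y] [NormedSpace ℝ Y] [CompleteSpace Y]
        (b : Y →L[ℝ] ℝ) (y : l2n n), β Y (b.smulRight y) = ‖b‖ * ‖y‖

/-!
Averaging over all sign vectors `ε ∈ {±1}ⁿ` kills the off-diagonal part of a matrix:
`2⁻ⁿ ∑_ε D_ε M D_ε = diag M`, where `D_ε` is the diagonal sign operator. Every `D_ε` is an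
isometry of `ℓ_pⁿ`, so for an ideal norm the average costs at most `α(M)`: among operators
`ℓ₂ⁿ → ℓ∞ⁿ` (resp. `ℓ₁ⁿ → ℓ₂ⁿ`) with unit diagonal the formal identity has the least ideal norm.
Given `u`, norming functionals `fᵢ` of the `u eᵢ` produce such an operator `(fᵢ)ᵢ ∘ u` with
`‖(fᵢ)ᵢ‖ ≤ 1`. Given `v`, vectors `yᵢ` with `(v yᵢ)ᵢ = 1` and `‖yᵢ‖ < r` exist for every `r > 1`
(the norm `‖v* eᵢ‖ = 1` need not be attained), and `v ∘ (eᵢ ↦ yᵢ)` has unit diagonal, whence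
`β(ι_{1,2}ⁿ) ≤ r β(v)` for all `r > 1`.
-/

open Finset

section SignAveraging

variable {ι R : Type*} [Fintype ι] [DecidableEq ι] [CommRing R]

theorem sum_units_mul_units_of_ne {i j : ι} (hij : i ≠ j) :
    ∑ ε : ι → ℤˣ, (ε i : R) * (ε j : R) = 0 := by
  refine sum_involution (fun ε _ => Function.update ε i (-ε i)) (fun ε _ => ?_)
    (fun ε _ _ h => ?_) (fun _ _ => mem_univ _) (fun ε _ => ?_)
  · simp [Function.update_of_ne hij.symm]
  · simpa using congrFun h i
  · ext1 k; by_cases hk : k = i <;> simp [hk]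

theorem sum_units_mul_sum_units_mul (c : ι → R) (j : ι) :
    ∑ ε : ι → ℤˣ, (ε j : R) * ∑ i, (ε i : R) * c i =
      Fintype.card (ι → ℤˣ) * c j := by
  simp_rw [mul_sum, ← mul_assoc]
  rw [sum_comm, ← sum_erase_add _ _ (mem_univ j), sum_eq_zero, zero_add]
  · simp [← Units.val_mul, ← Int.cast_mul]
  · intro i hi
    rw [← sum_mul, sum_units_mul_units_of_ne (ne_of_mem_erase hi).symm, zero_mul]

end SignAveraging

def unitsMulIso (u : ℤˣ) : ℝ ≃ₗᵢ[ℝ] ℝ where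
  toLinearEquiv := LinearEquiv.smulOfUnit (Units.map (Int.castRingHom ℝ) u)
  norm_map' t := by rcases Int.units_eq_one_or u with rfl | rfl <;> simp [LinearEquiv.smulOfUnit]

section SignFlip

variable {ι : Type*} [Fintype ι]

def PiLp.signFlip (p : ENNReal) [Fact (1 ≤ p)] (ε : ι → ℤˣ) :
    PiLp p (fun _ : ι => ℝ) ≃ₗᵢ[ℝ] PiLp p (fun _ : ι => ℝ) :=
  LinearIsometryEquiv.piLpCongrRight p fun i => unitsMulIso (ε i)

@[simp]
theorem PiLp.signFlip_apply (p : ENNReal) [Fact (1 ≤ p)] (ε : ι → ℤˣ)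
    (x : PiLp p (fun _ : ι => ℝ)) (i : ι) :
    PiLp.signFlip p ε x i = (ε i : ℝ) * x i := rfl

def Pi.signFlip (ε : ι → ℤˣ) : (ι → ℝ) ≃ₗᵢ[ℝ] (ι → ℝ) where
  toLinearEquiv := LinearEquiv.piCongrRight fun i => (unitsMulIso (ε i)).toLinearEquiv
  norm_map' x := by
    simp only [Pi.norm_def]
    congr 2
    ext1 i
    exact (unitsMulIso (ε i)).nnnorm_map (x i)

@[simp]
theorem Pi.signFlip_apply (ε : ι → ℤˣ) (x : ι → ℝ) (i : ι) :
    Pi.signFlip ε x i = (ε i : ℝ) * x i := rfl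

theorem sum_units_mul_apply_signFlip [DecidableEq ι] {p : ENNReal} [Fact (1 ≤ p)]
    (φ : PiLp p (fun _ : ι => ℝ) →ₗ[ℝ] ℝ) (x : PiLp p (fun _ : ι => ℝ)) (j : ι) :
    ∑ ε : ι → ℤˣ, (ε j : ℝ) * φ (PiLp.signFlip p ε x) =
      Fintype.card (ι → ℤˣ) * (x j * φ (PiLp.single p j 1)) := by
  have hexpand (y : PiLp p (fun _ : ι => ℝ)) : φ y = ∑ i, y i * φ (PiLp.single p i 1) := by
    conv_lhs => rw [← (PiLp.basisFun p ℝ ι).sum_repr y]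
    simp only [map_sum, map_smul, PiLp.basisFun_repr, PiLp.basisFun_apply, smul_eq_mul]
  rw [← sum_units_mul_sum_units_mul (fun i => x i * φ (PiLp.single p i 1)) j]
  refine sum_congr rfl fun ε _ => ?_
  simp only [hexpand (PiLp.signFlip p ε x), PiLp.signFlip_apply, mul_assoc]

end SignFlip

theorem iota2inf_apply {n : ℕ} (x : l2n n) (i : Fin n) : iota2inf n x i = x i := rfl

theorem iota12_apply {n : ℕ} (x : l1n n) (i : Fin n) : iota12 n x i = x i := rfl

theorem sum_signFlip_comp_comp_signFlip_eq_iota2inf {n : ℕ} (M : l2n n →L[ℝ] linfn n)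
    (hM : ∀ i, M (EuclideanSpace.single i 1) i = 1) :
    ∑ ε : Fin n → ℤˣ, (Pi.signFlip ε).toContinuousLinearMap.comp
        (M.comp (PiLp.signFlip 2 ε).toContinuousLinearMap) =
      (Fintype.card (Fin n → ℤˣ) : ℝ) • iota2inf n := by
  ext x j
  simpa [iota2inf_apply, hM] using
    sum_units_mul_apply_signFlip ((ContinuousLinearMap.proj j).comp M).toLinearMap x j

theorem sum_signFlip_comp_comp_signFlip_eq_iota12 {n : ℕ} (M : l1n n →L[ℝ] l2n n)
    (hM : ∀ i, M (PiLp.single 1 i 1) i = 1) :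
    ∑ ε : Fin n → ℤˣ, (PiLp.signFlip 2 ε).toContinuousLinearMap.comp
        (M.comp (PiLp.signFlip 1 ε).toContinuousLinearMap) =
      (Fintype.card (Fin n → ℤˣ) : ℝ) • iota12 n := by
  ext x j
  simpa [iota12_apply, hM] using
    sum_units_mul_apply_signFlip ((EuclideanSpace.proj j).comp M).toLinearMap x j

theorem ContinuousLinearMap.exists_apply_eq_one_norm_lt {E : Type*} [NormedAddCommGroup E]
    [NormedSpace ℝ E] (φ : E →L[ℝ] ℝ) {r : ℝ} (hr : 1 < r * ‖φ‖) :
    ∃ y, φ y = 1 ∧ ‖y‖ < r := by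
  have hr0 : 0 < r := by
    by_contra! h
    nlinarith [norm_nonneg φ]
  obtain ⟨x, hx, hφx⟩ := φ.exists_lt_apply_of_lt_opNorm ((inv_lt_iff_one_lt_mul₀' hr0).2 hr)
  have hφx0 : φ x ≠ 0 := norm_pos_iff.1 ((inv_pos.2 hr0).trans hφx)
  refine ⟨(φ x)⁻¹ • x, by simp [hφx0], ?_⟩
  rw [norm_smul, norm_inv]
  calc ‖φ x‖⁻¹ * ‖x‖ ≤ ‖φ x‖⁻¹ * 1 := by gcongr
    _ < r := by rwa [mul_one, inv_lt_comm₀ (norm_pos_iff.2 hφx0) hr0]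

section Synthesis

variable {ι E : Type*} [Fintype ι] [NormedAddCommGroup E] [NormedSpace ℝ E]

def l1Synthesis (y : ι → E) : PiLp 1 (fun _ : ι => ℝ) →L[ℝ] E :=
  LinearMap.toContinuousLinearMap ((PiLp.basisFun 1 ℝ ι).constr ℝ y)

theorem l1Synthesis_apply (y : ι → E) (x : PiLp 1 (fun _ : ι => ℝ)) :
    l1Synthesis y x = ∑ i, x i • y i := by
  simp [l1Synthesis, Module.Basis.constr_apply_fintype]

theorem l1Synthesis_single [DecidableEq ι] (y : ι → E) (i : ι) :
    l1Synthesis y (PiLp.single 1 i 1) = y i := by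
  simp [l1Synthesis]

theorem norm_l1Synthesis_le {y : ι → E} {r : ℝ} (hr : 0 ≤ r) (hy : ∀ i, ‖y i‖ ≤ r) :
    ‖l1Synthesis y‖ ≤ r := by
  refine ContinuousLinearMap.opNorm_le_bound _ hr fun x => ?_
  rw [l1Synthesis_apply, PiLp.norm_eq_of_L1, mul_sum]
  refine (norm_sum_le _ _).trans (sum_le_sum fun i _ => ?_)
  rw [norm_smul, mul_comm]
  gcongr
  exact hy i

end Synthesis

theorem Seminorm.le_of_sum_eq_card_smul {E κ : Type*} [AddCommGroup E] [Module ℝ E]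
    [Fintype κ] [Nonempty κ] (p : Seminorm ℝ E) {y : κ → E} {x : E}
    (hsum : ∑ k, y k = (Fintype.card κ : ℝ) • x) {C : ℝ} (hC : ∀ k, p (y k) ≤ C) :
    p x ≤ C := by
  have hcard : (0 : ℝ) < Fintype.card κ := by exact_mod_cast Fintype.card_pos
  refine le_of_mul_le_mul_left ?_ hcard
  calc (Fintype.card κ : ℝ) * p x = p (∑ k, y k) := by
        rw [hsum, map_smul_eq_mul, Real.norm_natCast]
    _ ≤ ∑ k, p (y k) := le_sum_of_subadditive p (map_zero p).le (map_add_le_add p) _ _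
    _ ≤ Fintype.card κ * C := (sum_le_sum fun k _ => hC k).trans_eq (by simp)

namespace IdealNormDom

variable {n : ℕ} (A : IdealNormDom n) {X Y : Type} [NormedAddCommGroup X] [NormedSpace ℝ X]
  [CompleteSpace X] [NormedAddCommGroup Y] [NormedSpace ℝ Y] [CompleteSpace Y]

def seminorm (X : Type) [NormedAddCommGroup X] [NormedSpace ℝ X] [CompleteSpace X] :
    Seminorm ℝ (l2n n →L[ℝ] X) :=
  Seminorm.of (A.α X) (A.add_le X) fun c u => by rw [A.smul_eq, Real.norm_eq_abs]

theorem α_comp_comp_le_of_norm_le_one (T : X →L[ℝ] Y) (u : l2n n →L[ℝ] X)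
    (D : l2n n →L[ℝ] l2n n) (hT : ‖T‖ ≤ 1) (hD : ‖D‖ ≤ 1) :
    A.α Y (T.comp (u.comp D)) ≤ A.α X u := by
  have hu : 0 ≤ A.α X u := apply_nonneg (A.seminorm X) u
  calc A.α Y (T.comp (u.comp D)) ≤ ‖T‖ * A.α X u * ‖D‖ := A.ideal_upper X Y T u D
    _ ≤ 1 * A.α X u * 1 := by gcongr
    _ = A.α X u := by ring

theorem α_iota2inf_le (M : l2n n →L[ℝ] linfn n)
    (hM : ∀ i, M (EuclideanSpace.single i 1) i = 1) :
    A.α (linfn n) (iota2inf n) ≤ A.α (linfn n) M :=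
  (A.seminorm _).le_of_sum_eq_card_smul (sum_signFlip_comp_comp_signFlip_eq_iota2inf M hM)
    fun ε => A.α_comp_comp_le_of_norm_le_one _ _ _
      (Pi.signFlip ε).toLinearIsometry.norm_toContinuousLinearMap_le
      (PiLp.signFlip 2 ε).toLinearIsometry.norm_toContinuousLinearMap_le

theorem α_iota2inf_le_of_norm_apply_single (u : l2n n →L[ℝ] X)
    (hu : ∀ i, ‖u (EuclideanSpace.single i 1)‖ = 1) :
    A.α (linfn n) (iota2inf n) ≤ A.α X u := by
  choose f hf_norm hf_apply using fun i =>
    exists_dual_vector ℝ (u (EuclideanSpace.single i 1)) (by simp [hu])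
  let T : X →L[ℝ] linfn n := ContinuousLinearMap.pi f
  calc A.α (linfn n) (iota2inf n) ≤ A.α (linfn n) (T.comp (u.comp (.id ℝ _))) :=
        A.α_iota2inf_le _ fun i => by simp [T, hf_apply, hu]
    _ ≤ A.α X u := A.α_comp_comp_le_of_norm_le_one _ _ _
        (ContinuousLinearMap.norm_pi_le_of_le (fun i => (hf_norm i).le) zero_le_one)
        ContinuousLinearMap.norm_id_le

end IdealNormDom

namespace IdealNormCod

variable {n : ℕ} (B : IdealNormCod n) {X Y : Type} [NormedAddCommGroup X] [NormedSpace ℝ X]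
  [CompleteSpace X] [NormedAddCommGroup Y] [NormedSpace ℝ Y] [CompleteSpace Y]

def seminorm (Y : Type) [NormedAddCommGroup Y] [NormedSpace ℝ Y] [CompleteSpace Y] :
    Seminorm ℝ (Y →L[ℝ] l2n n) :=
  Seminorm.of (B.β Y) (B.add_le Y) fun c v => by rw [B.smul_eq, Real.norm_eq_abs]

theorem β_comp_comp_le (D : l2n n →L[ℝ] l2n n) (v : Y →L[ℝ] l2n n) (T : X →L[ℝ] Y)
    (hD : ‖D‖ ≤ 1) : B.β X (D.comp (v.comp T)) ≤ B.β Y v * ‖T‖ := by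
  have hv : 0 ≤ B.β Y v := apply_nonneg (B.seminorm Y) v
  calc B.β X (D.comp (v.comp T)) ≤ ‖D‖ * B.β Y v * ‖T‖ := B.ideal_upper X Y D v T
    _ ≤ 1 * B.β Y v * ‖T‖ := by gcongr
    _ = B.β Y v * ‖T‖ := by ring

theorem β_iota12_le (M : l1n n →L[ℝ] l2n n) (hM : ∀ i, M (PiLp.single 1 i 1) i = 1) :
    B.β (l1n n) (iota12 n) ≤ B.β (l1n n) M :=
  (B.seminorm _).le_of_sum_eq_card_smul (sum_signFlip_comp_comp_signFlip_eq_iota12 M hM)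
    fun ε => (B.β_comp_comp_le _ _ _
      (PiLp.signFlip 2 ε).toLinearIsometry.norm_toContinuousLinearMap_le).trans <|
        mul_le_of_le_one_right (apply_nonneg (B.seminorm _) M)
          (PiLp.signFlip 1 ε).toLinearIsometry.norm_toContinuousLinearMap_le

theorem β_iota12_le_of_norm_proj_comp (v : X →L[ℝ] l2n n)
    (hv : ∀ i, ‖(EuclideanSpace.proj i).comp v‖ = 1) :
    B.β (l1n n) (iota12 n) ≤ B.β X v := by
  refine (le_iff_forall_one_lt_le_mul₀ (apply_nonneg (B.seminorm X) v)).2 fun r hr => ?_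
  choose y hy_apply hy_norm using fun i =>
    ((EuclideanSpace.proj i).comp v).exists_apply_eq_one_norm_lt (r := r) (by rwa [hv, mul_one])
  calc B.β (l1n n) (iota12 n)
        ≤ B.β (l1n n) ((ContinuousLinearMap.id ℝ _).comp (v.comp (l1Synthesis y))) :=
        B.β_iota12_le _ fun i => by simpa [l1Synthesis_single] using hy_apply i
    _ ≤ B.β X v * ‖l1Synthesis y‖ := B.β_comp_comp_le _ _ _ ContinuousLinearMap.norm_id_le
    _ ≤ B.β X v * r := by
        gcongr
        · exact apply_nonneg (B.seminorm X) v
        · exact norm_l1Synthesis_le (by linarith) fun i => (hy_norm i).le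

end IdealNormCod

/-- **Lemma 1.2.** (1) If `‖u e_i‖ = 1` for all `i` then `α(ι_{2,∞}ⁿ) ≤ α(u)`;
(2) if `‖v* e_i‖ = 1` for all `i` then `β(ι_{1,2}ⁿ) ≤ β(v)`. -/
theorem ideal_norm_min (n : ℕ) (A : IdealNormDom n) (B : IdealNormCod n) :
    (∀ (X : Type) [NormedAddCommGroup X] [NormedSpace ℝ X] [CompleteSpace X]
      (u : l2n n →L[ℝ] X), (∀ i, ‖u (EuclideanSpace.single i 1)‖ = 1) →
        A.α (linfn n) (iota2inf n) ≤ A.α X u) ∧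
    (∀ (X : Type) [NormedAddCommGroup X] [NormedSpace ℝ X] [CompleteSpace X]
      (v : X →L[ℝ] l2n n), (∀ i : Fin n, ‖(EuclideanSpace.proj i).comp v‖ = 1) →
        B.β (l1n n) (iota12 n) ≤ B.β X v) :=
  ⟨fun _ _ _ _ => A.α_iota2inf_le_of_norm_apply_single,
    fun _ _ _ _ => B.β_iota12_le_of_norm_proj_comp⟩
end
end

section
/- Let 1 ≤ n ≤ N and let H ⊂ ℓ₂^N be an n-dimensional subspace. Then there exist an orthonormal basis (h_k)_{k=1}^n of H and pairwise distinct coordinates j_k ∈ {1,…,N} such that |(h_k, e_{j_k})|² ≥ n/(3N) for all k ≤ n/3. -/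
/-!
Greedy construction. Suppose orthonormal `h₁, …, hₘ ∈ H` with distinct coordinates
`j₁, …, jₘ` are chosen, and let `K` be the orthogonal complement of their span inside `H`, so
`dim K = n - m`. Since `∑ⱼ ‖P_K eⱼ‖² = tr P_K = n - m` and every term is at most `1`, the unused
coordinates carry at least `n - 2m`; hence one of them has `N ‖P_K eⱼ‖² ≥ n - 2m`, and the unit
vector in the direction of `P_K eⱼ` has inner product `‖P_K eⱼ‖` with `eⱼ`. For `m + 1 ≤ n / 3`
this gives `n - 2m > n / 3`.
-/

open Module Submodule Finset
open scoped RealInnerProductSpace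

section InnerProductSpace

variable {E : Type*} [NormedAddCommGroup E] [InnerProductSpace ℝ E]

theorem Orthonormal.snoc {m : ℕ} {h : Fin m → E} (hh : Orthonormal ℝ h) {v : E} (hv : ‖v‖ = 1)
    (hhv : ∀ k, ⟪h k, v⟫ = 0) : Orthonormal ℝ (Fin.snoc h v : Fin (m + 1) → E) := by
  refine ⟨fun k => ?_, fun a b hab => ?_⟩
  · induction k using Fin.lastCases <;> simp [hv, hh.norm_eq_one]
  · induction a using Fin.lastCases <;> induction b using Fin.lastCases
    all_goals simp_all [real_inner_comm, hh.inner_eq_zero]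

namespace Submodule

variable (K : Submodule ℝ E) [K.HasOrthogonalProjection]

theorem real_inner_starProjection_self (x : E) :
    ⟪K.starProjection x, x⟫ = ‖K.starProjection x‖ ^ 2 := by
  simpa using K.re_inner_starProjection_eq_normSq x

variable {K} in
theorem exists_norm_eq_one_real_inner_eq_norm_starProjection (hK : K ≠ ⊥) (x : E) :
    ∃ v ∈ K, ‖v‖ = 1 ∧ ⟪v, x⟫ = ‖K.starProjection x‖ := by
  by_cases hx : K.starProjection x = 0
  · obtain ⟨w, hwK, hw⟩ := exists_mem_ne_zero_of_ne_bot hK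
    refine ⟨‖w‖⁻¹ • w, K.smul_mem _ hwK, norm_smul_inv_norm hw, ?_⟩
    rw [hx, norm_zero, ← starProjection_eq_self_iff.2 (K.smul_mem _ hwK),
      inner_starProjection_left_eq_right, hx, inner_zero_right]
  · refine ⟨‖K.starProjection x‖⁻¹ • K.starProjection x,
      K.smul_mem _ (K.starProjection_apply_mem x), norm_smul_inv_norm hx, ?_⟩
    rw [real_inner_smul_left, real_inner_starProjection_self]
    field_simp [norm_ne_zero_iff.2 hx]

end Submodule

end InnerProductSpace

namespace EuclideanSpace

variable {ι : Type*} [Fintype ι] [DecidableEq ι]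

theorem sum_norm_starProjection_single_sq (K : Submodule ℝ (EuclideanSpace ℝ ι)) :
    ∑ i, ‖K.starProjection (single i 1)‖ ^ 2 = finrank ℝ K := by
  have hproj : LinearMap.IsProj K (K.starProjection : EuclideanSpace ℝ ι →ₗ[ℝ] _) :=
    ⟨K.starProjection_apply_mem, fun _ hx => starProjection_eq_self_iff.2 hx⟩
  rw [← hproj.trace, LinearMap.trace_eq_sum_inner _ (basisFun ι ℝ)]
  refine sum_congr rfl fun i _ => ?_
  rw [basisFun_apply, ContinuousLinearMap.coe_coe, real_inner_comm,
    real_inner_starProjection_self]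

theorem exists_norm_eq_one_sq_inner_single_ge {K : Submodule ℝ (EuclideanSpace ℝ ι)}
    (hK : K ≠ ⊥) {S : Finset ι} (hS : S ≠ univ) :
    ∃ v ∈ K, ‖v‖ = 1 ∧ ∃ j ∉ S,
      (finrank ℝ K : ℝ) - #S ≤ Fintype.card ι * ⟪v, single j 1⟫ ^ 2 := by
  set f : ι → ℝ := fun j => ‖K.starProjection (single j 1)‖ ^ 2
  have hf_le_one (j : ι) : f j ≤ 1 := by
    have := K.norm_starProjection_apply_le (single j (1 : ℝ))
    rw [PiLp.norm_single, norm_one] at this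
    exact pow_le_one₀ (norm_nonneg _) this
  have hsum : (finrank ℝ K : ℝ) - #S ≤ ∑ j ∈ Sᶜ, f j := by
    have hS_le : ∑ j ∈ S, f j ≤ #S := by
      simpa using sum_le_sum fun j (_ : j ∈ S) => hf_le_one j
    rw [← sum_norm_starProjection_single_sq K, ← sum_add_sum_compl S f]
    linarith
  obtain ⟨j, hj, hmax⟩ := Sᶜ.exists_max_image f (by simpa [nonempty_iff_ne_empty] using hS)
  obtain ⟨v, hvK, hv, hvj⟩ := K.exists_norm_eq_one_real_inner_eq_norm_starProjection hK
    (single j 1)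
  refine ⟨v, hvK, hv, j, mem_compl.1 hj, ?_⟩
  calc (finrank ℝ K : ℝ) - #S ≤ ∑ j ∈ Sᶜ, f j := hsum
    _ ≤ #Sᶜ * f j := by simpa using sum_le_card_nsmul _ _ _ hmax
    _ ≤ Fintype.card ι * ⟪v, single j 1⟫ ^ 2 := by
      rw [hvj]
      exact mul_le_mul_of_nonneg_right (mod_cast card_le_univ _) (sq_nonneg _)

theorem exists_orthonormal_injective_sq_inner_single_ge
    (H : Submodule ℝ (EuclideanSpace ℝ ι)) {m : ℕ} (hm : m ≤ finrank ℝ H) :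
    ∃ (h : Fin m → EuclideanSpace ℝ ι) (j : Fin m → ι),
      Orthonormal ℝ h ∧ (∀ k, h k ∈ H) ∧ Function.Injective j ∧
      ∀ k : Fin m, (finrank ℝ H : ℝ) - 2 * k ≤
        Fintype.card ι * ⟪h k, single (j k) 1⟫ ^ 2 := by
  induction m with
  | zero =>
    exact ⟨Fin.elim0, Fin.elim0, .of_isEmpty _, fun k => k.elim0,
      Function.injective_of_subsingleton _, fun k => k.elim0⟩
  | succ m ih =>
    obtain ⟨h, j, hh, hhH, hj, hbound⟩ := ih (by omega)
    set K := (span ℝ (Set.range h))ᗮ ⊓ H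
    have hdim : m + finrank ℝ K = finrank ℝ H := by
      rw [← finrank_add_inf_finrank_orthogonal (span_le.2 (Set.range_subset_iff.2 hhH)),
        finrank_span_eq_card hh.linearIndependent, Fintype.card_fin]
    have hK : K ≠ ⊥ := by
      rw [Ne, ← finrank_eq_zero]; omega
    have hS_card : #(univ.image j) = m := by
      rw [card_image_of_injective _ hj, card_univ, Fintype.card_fin]
    have hS : univ.image j ≠ univ := by
      have := H.finrank_le
      rw [finrank_euclideanSpace] at this
      exact (card_lt_iff_ne_univ _).1 (by omega)
    obtain ⟨v, hvK, hv, j', hj', hv_bound⟩ := exists_norm_eq_one_sq_inner_single_ge hK hS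
    have hhv (k : Fin m) : ⟪h k, v⟫ = 0 :=
      (mem_orthogonal _ _).1 (mem_inf.1 hvK).1 _ (subset_span (Set.mem_range_self k))
    refine ⟨Fin.snoc h v, Fin.snoc j j', hh.snoc hv hhv, fun k => ?_,
      Fin.snoc_injective_of_injective hj (by simpa using hj'), fun k => ?_⟩
    · induction k using Fin.lastCases <;> simp [hhH, (mem_inf.1 hvK).2]
    · induction k using Fin.lastCases with
      | last =>
        simp only [Fin.snoc_last, Fin.val_last]
        rw [hS_card] at hv_bound
        push_cast [← hdim] at hv_bound ⊢
        linarith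
      | cast k => simpa using hbound k

end EuclideanSpace

theorem subspace_orthonormal_basis_large_coordinates_general
    (n N : ℕ)
    (H : Submodule ℝ (EuclideanSpace ℝ (Fin N)))
    (hH : Module.finrank ℝ H = n) :
    ∃ (h : Fin n → EuclideanSpace ℝ (Fin N)) (j : Fin n → Fin N),
      Orthonormal ℝ h ∧ (∀ k, h k ∈ H) ∧
      Submodule.span ℝ (Set.range h) = H ∧
      Function.Injective j ∧
      ∀ k : Fin n, ((k : ℕ) : ℝ) + 1 ≤ (n : ℝ) / 3 →
        (n : ℝ) / (3 * (N : ℝ))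
          ≤ (inner ℝ (h k) (EuclideanSpace.single (j k) (1 : ℝ)) : ℝ) ^ 2 := by
  obtain ⟨h, j, hh, hhH, hj, hbound⟩ :=
    EuclideanSpace.exists_orthonormal_injective_sq_inner_single_ge H hH.ge
  refine ⟨h, j, hh, hhH, ?_, hj, fun k hk => ?_⟩
  · refine eq_of_le_of_finrank_eq (span_le.2 (Set.range_subset_iff.2 hhH)) ?_
    rw [finrank_span_eq_card hh.linearIndependent, Fintype.card_fin, hH]
  · have hnN : (n : ℝ) ≤ N := by
      have := H.finrank_le
      rw [hH, finrank_euclideanSpace_fin] at this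
      exact_mod_cast this
    have hk_bound := hbound k
    rw [hH, Fintype.card_fin] at hk_bound
    rw [div_le_iff₀ (by linarith)]
    linarith

/-- **Lemma 3.1.** Every `n`-dimensional subspace `H` of `ℓ₂^N` has an orthonormal
basis `(h_k)` together with pairwise distinct coordinates `j_k` such that
`|(h_k, e_{j_k})|² ≥ n/(3N)` for all `k ≤ n/3`. -/
theorem subspace_orthonormal_basis_large_coordinates
    (n N : ℕ) (hn : 1 ≤ n) (hnN : n ≤ N)
    (H : Submodule ℝ (EuclideanSpace ℝ (Fin N)))
    (hH : Module.finrank ℝ H = n) :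
    ∃ (h : Fin n → EuclideanSpace ℝ (Fin N)) (j : Fin n → Fin N),
      Orthonormal ℝ h ∧ (∀ k, h k ∈ H) ∧
      Submodule.span ℝ (Set.range h) = H ∧
      Function.Injective j ∧
      ∀ k : Fin n, ((k : ℕ) : ℝ) + 1 ≤ (n : ℝ) / 3 →
        (n : ℝ) / (3 * (N : ℝ))
          ≤ (inner ℝ (h k) (EuclideanSpace.single (j k) (1 : ℝ)) : ℝ) ^ 2 :=
  subspace_orthonormal_basis_large_coordinates_general n N H hH
end
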